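/- arXiv:2401.08215 — 3 statements merged into one kernel-verified Lean document; each statement's English description precedes it below -/
import Mathlib

section
/- Let n1, n2, d1, d2 be positive integers with 1 ≤ d1 ≤ n1 - 1 and 1 ≤ d2 ≤ n2 - 1. If d1/n1 = d2/n2 (as rationals) and binom(n1, d1) = binom(n2, d2), then n1 = n2 and d1 = d2. -/
/-!
Write `n = d + e`. The binomial coefficient `(d + e).choose d` is symmetric in `d` and `e` and
strictly increasing in each of them as long as the other one is positive. Equal ratios `d / n`
mean `d₁ e₂ = d₂ e₁`, so `d₁ < d₂` forces `e₁ < e₂` and hence a strictly larger binomial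
coefficient; by symmetry the same holds for `d₂ < d₁`, leaving only `d₁ = d₂`, `e₁ = e₂`.
-/

namespace Nat

theorem strictMono_add_choose {e : ℕ} (he : 0 < e) : StrictMono fun d => (d + e).choose e := by
  obtain ⟨e, rfl⟩ := Nat.exists_eq_add_of_lt he
  refine strictMono_nat_of_lt_succ fun d => ?_
  have hpos : 0 < (d + (e + 1)).choose e := Nat.choose_pos (by omega)
  rw [show d + 1 + (0 + e + 1) = d + (e + 1) + 1 by ring, zero_add, Nat.choose_succ_succ']
  omega

theorem add_choose_lt_add_choose {d₁ d₂ e₁ e₂ : ℕ} (he₁ : 0 < e₁) (hd : d₁ < d₂) (he : e₁ ≤ e₂) :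
    (d₁ + e₁).choose d₁ < (d₂ + e₂).choose d₂ :=
  calc (d₁ + e₁).choose d₁ = (d₁ + e₁).choose e₁ := Nat.choose_symm_add
    _ < (d₂ + e₁).choose e₁ := strictMono_add_choose he₁ hd
    _ = (d₂ + e₁).choose d₂ := Nat.choose_symm_add.symm
    _ ≤ (d₂ + e₂).choose d₂ := Nat.choose_le_choose d₂ (by omega)

theorem eq_of_add_choose_eq_of_mul_eq_mul {d₁ d₂ e₁ e₂ : ℕ} (hd₁ : 0 < d₁) (hd₂ : 0 < d₂)
    (he₁ : 0 < e₁) (he₂ : 0 < e₂) (hratio : d₁ * e₂ = d₂ * e₁)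
    (hchoose : (d₁ + e₁).choose d₁ = (d₂ + e₂).choose d₂) : d₁ = d₂ ∧ e₁ = e₂ := by
  rcases lt_trichotomy d₁ d₂ with hlt | rfl | hgt
  · have he : e₁ < e₂ := by nlinarith
    exact absurd hchoose (add_choose_lt_add_choose he₁ hlt he.le).ne
  · exact ⟨rfl, Nat.eq_of_mul_eq_mul_left hd₁ hratio.symm⟩
  · have he : e₂ < e₁ := by nlinarith
    exact absurd hchoose (add_choose_lt_add_choose he₂ hgt he.le).ne'

end Nat

theorem stmt_0_general (n1 n2 d1 d2 : ℕ)
    (hd1 : 1 ≤ d1) (hd1' : d1 ≤ n1 - 1) (hd2 : 1 ≤ d2) (hd2' : d2 ≤ n2 - 1)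
    (hratio : (d1 : ℚ) / (n1 : ℚ) = (d2 : ℚ) / (n2 : ℚ))
    (hbinom : n1.choose d1 = n2.choose d2) :
    n1 = n2 ∧ d1 = d2 := by
  obtain ⟨e1, rfl, he1⟩ : ∃ e, n1 = d1 + e ∧ 0 < e := ⟨n1 - d1, by omega, by omega⟩
  obtain ⟨e2, rfl, he2⟩ : ∃ e, n2 = d2 + e ∧ 0 < e := ⟨n2 - d2, by omega, by omega⟩
  have hcross : d1 * e2 = d2 * e1 := by
    rw [div_eq_div_iff (by positivity) (by positivity)] at hratio
    have : d1 * (d2 + e2) = d2 * (d1 + e1) := by exact_mod_cast hratio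
    linarith
  obtain ⟨rfl, rfl⟩ := Nat.eq_of_add_choose_eq_of_mul_eq_mul hd1 hd2 he1 he2 hcross hbinom
  exact ⟨rfl, rfl⟩

theorem stmt_0 (n1 n2 d1 d2 : ℕ) (hn1 : 0 < n1) (hn2 : 0 < n2)
    (hd1 : 1 ≤ d1) (hd1' : d1 ≤ n1 - 1) (hd2 : 1 ≤ d2) (hd2' : d2 ≤ n2 - 1)
    (hratio : (d1 : ℚ) / (n1 : ℚ) = (d2 : ℚ) / (n2 : ℚ))
    (hbinom : n1.choose d1 = n2.choose d2) :
    n1 = n2 ∧ d1 = d2 :=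
  stmt_0_general n1 n2 d1 d2 hd1 hd1' hd2 hd2' hratio hbinom
end

section
/- Let n1, n2, d1, d2 be positive integers with 1 ≤ d1 ≤ n1 - 1 and 1 ≤ d2 ≤ n2 - 1. If binom(n1 - 1, d1) = binom(n2 - 1, d2) and binom(n1 - 1, d1 - 1) = binom(n2 - 1, d2 - 1), then n1 = n2 and d1 = d2. -/
/-!
Write the row as `m = d + q`. The identity `C(m, d) * d = C(m, d - 1) * (q + 1)` shows that the
two equalities of binomial coefficients force `d₁ / (q₁ + 1) = d₂ / (q₂ + 1)`, so `d` and `q`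
move in the same direction. But `C(d + q, d)` is monotone in `d` and, for `d ≥ 1`, strictly
increasing in `q`, so one common value `C(m, d)` rules out any movement at all.
-/

namespace Nat

lemma add_choose_le_add_choose_of_le {p₁ p₂ : ℕ} (q : ℕ) (hp : p₁ ≤ p₂) :
    (p₁ + q).choose p₁ ≤ (p₂ + q).choose p₂ := by
  induction p₂, hp using Nat.le_induction with
  | base => rfl
  | succ p _ ih =>
    calc (p₁ + q).choose p₁ ≤ (p + q).choose p := ih
      _ ≤ (p + q + 1).choose (p + 1) := by rw [choose_succ_succ]; exact le_add_right _ _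
      _ = (p + 1 + q).choose (p + 1) := by rw [Nat.add_right_comm]

lemma add_choose_lt_add_choose_succ (p q : ℕ) (hp : 0 < p) :
    (p + q).choose p < (p + q + 1).choose p := by
  obtain ⟨r, rfl⟩ := exists_eq_add_one.mpr hp
  rw [choose_succ_succ', Nat.lt_add_left_iff_pos]
  exact choose_pos (by omega)

lemma add_choose_lt_add_choose_s1 {p₁ p₂ q₁ q₂ : ℕ} (hp₀ : 0 < p₁) (hp : p₁ ≤ p₂) (hq : q₁ < q₂) :
    (p₁ + q₁).choose p₁ < (p₂ + q₂).choose p₂ :=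
  calc (p₁ + q₁).choose p₁ ≤ (p₂ + q₁).choose p₂ := add_choose_le_add_choose_of_le q₁ hp
    _ < (p₂ + q₁ + 1).choose p₂ := add_choose_lt_add_choose_succ p₂ q₁ (hp₀.trans_le hp)
    _ ≤ (p₂ + q₂).choose p₂ := choose_le_choose _ (by omega)

lemma add_choose_mul_eq {p : ℕ} (q : ℕ) (hp : 0 < p) :
    (p + q).choose p * p = (p + q).choose (p - 1) * (q + 1) := by
  have h := choose_succ_right_eq (p + q) (p - 1)
  rwa [Nat.sub_add_cancel hp, show p + q - (p - 1) = q + 1 by omega] at h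

lemma eq_and_eq_of_add_choose_eq {p₁ p₂ q₁ q₂ : ℕ} (hp₁ : 0 < p₁) (hp₂ : 0 < p₂)
    (h : (p₁ + q₁).choose p₁ = (p₂ + q₂).choose p₂) (hratio : p₁ * (q₂ + 1) = p₂ * (q₁ + 1)) :
    p₁ = p₂ ∧ q₁ = q₂ := by
  rcases lt_trichotomy q₁ q₂ with hq | rfl | hq
  · have hp : p₁ < p₂ := by
      by_contra! hp
      nlinarith
    exact absurd h (add_choose_lt_add_choose_s1 hp₁ hp.le hq).ne
  · exact ⟨Nat.eq_of_mul_eq_mul_right (succ_pos q₁) hratio, rfl⟩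
  · have hp : p₂ < p₁ := by
      by_contra! hp
      nlinarith
    exact absurd h.symm (add_choose_lt_add_choose_s1 hp₂ hp.le hq).ne

lemma eq_and_eq_of_choose_eq_of_choose_pred_eq {m₁ m₂ d₁ d₂ : ℕ}
    (hd₁ : 0 < d₁) (hd₁m : d₁ ≤ m₁) (hd₂ : 0 < d₂) (hd₂m : d₂ ≤ m₂)
    (h : m₁.choose d₁ = m₂.choose d₂) (h' : m₁.choose (d₁ - 1) = m₂.choose (d₂ - 1)) :
    m₁ = m₂ ∧ d₁ = d₂ := by
  obtain ⟨q₁, rfl⟩ := exists_add_of_le hd₁m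
  obtain ⟨q₂, rfl⟩ := exists_add_of_le hd₂m
  have ha : 0 < (d₁ + q₁).choose d₁ := choose_pos (le_add_right _ _)
  have hb : 0 < (d₁ + q₁).choose (d₁ - 1) := choose_pos (by omega)
  have e₁ := add_choose_mul_eq q₁ hd₁
  have e₂ := add_choose_mul_eq q₂ hd₂
  rw [← h, ← h'] at e₂
  have hratio : d₁ * (q₂ + 1) = d₂ * (q₁ + 1) := by
    refine Nat.eq_of_mul_eq_mul_left (Nat.mul_pos ha hb) ?_
    calc (d₁ + q₁).choose d₁ * (d₁ + q₁).choose (d₁ - 1) * (d₁ * (q₂ + 1))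
        = (d₁ + q₁).choose d₁ * d₁ * ((d₁ + q₁).choose (d₁ - 1) * (q₂ + 1)) := by ring
      _ = (d₁ + q₁).choose (d₁ - 1) * (q₁ + 1) * ((d₁ + q₁).choose d₁ * d₂) := by rw [e₁, e₂]
      _ = (d₁ + q₁).choose d₁ * (d₁ + q₁).choose (d₁ - 1) * (d₂ * (q₁ + 1)) := by ring
  obtain ⟨rfl, rfl⟩ := eq_and_eq_of_add_choose_eq hd₁ hd₂ h hratio
  exact ⟨rfl, rfl⟩

end Nat

theorem stmt_1_general (n1 n2 d1 d2 : ℕ)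
    (hd1 : 1 ≤ d1) (hd1' : d1 ≤ n1 - 1) (hd2 : 1 ≤ d2) (hd2' : d2 ≤ n2 - 1)
    (hbinom1 : (n1 - 1).choose d1 = (n2 - 1).choose d2)
    (hbinom2 : (n1 - 1).choose (d1 - 1) = (n2 - 1).choose (d2 - 1)) :
    n1 = n2 ∧ d1 = d2 := by
  obtain ⟨hn, hd⟩ :=
    Nat.eq_and_eq_of_choose_eq_of_choose_pred_eq hd1 hd1' hd2 hd2' hbinom1 hbinom2
  exact ⟨by omega, hd⟩

theorem stmt_1 (n1 n2 d1 d2 : ℕ) (hn1 : 0 < n1) (hn2 : 0 < n2)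
    (hd1 : 1 ≤ d1) (hd1' : d1 ≤ n1 - 1) (hd2 : 1 ≤ d2) (hd2' : d2 ≤ n2 - 1)
    (hbinom1 : (n1 - 1).choose d1 = (n2 - 1).choose d2)
    (hbinom2 : (n1 - 1).choose (d1 - 1) = (n2 - 1).choose (d2 - 1)) :
    n1 = n2 ∧ d1 = d2 :=
  stmt_1_general n1 n2 d1 d2 hd1 hd1' hd2 hd2' hbinom1 hbinom2
end

section
/- Let G = (I, A) be a finite weakly connected directed graph (no loops, no multiple arrows), and let J, J' ⊆ I be two subsets of vertices with the same cardinality. Then J' can be obtained from J by finitely many moves, where a move replaces a subset K by (K \ {i}) ∪ {j} for some i ∈ K, j ∉ K \ {i} with (i, j) or (j, i) an arrow of G. -/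
/-!
Sliding a single token along a walk `a = v₀, v₁, …, vₘ = j` to a free vertex `j`: if `v₁` is free
the token at `a` moves there and continues; if `v₁` is occupied, first (inductively) slide the token
at `v₁` to `j` and then move the token at `a` into the vacated `v₁`. With weak connectivity this
trades any vertex of `J \ J'` for one of `J' \ J`, decreasing `#(J \ J')` by one.
-/

open Finset Relation

section TokenSlide

variable {α : Type*} [DecidableEq α] {r : α → α → Prop}

def TokenSlide (r : α → α → Prop) (K K' : Finset α) : Prop :=
  ∃ i j, r i j ∧ i ∈ K ∧ j ∉ K.erase i ∧ K' = insert j (K.erase i)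

theorem tokenSlide_of_mem_of_notMem {K : Finset α} {i j : α} (hij : r i j) (hi : i ∈ K)
    (hj : j ∉ K) : TokenSlide r K (insert j (K.erase i)) :=
  ⟨i, j, hij, hi, fun h => hj (mem_of_mem_erase h), rfl⟩

theorem reflTransGen_tokenSlide_insert_erase {a j : α} (h : ReflTransGen r a j) :
    ∀ {K : Finset α}, a ∈ K → j ∉ K → ReflTransGen (TokenSlide r) K (insert j (K.erase a)) := by
  induction h using ReflTransGen.head_induction_on with
  | refl => exact fun ha hj => absurd ha hj
  | @head a b hab _ ih =>
    intro K ha hj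
    by_cases hbK : b ∈ K
    · by_cases hab' : a = b
      · subst hab'
        exact ih ha hj
      · have hmove := tokenSlide_of_mem_of_notMem (K := insert j (K.erase b)) hab
          (by simp [ha, hab']) (by simp [Ne.symm (fun h : j = b => hj (h ▸ hbK))])
        have hset : insert b ((insert j (K.erase b)).erase a) = insert j (K.erase a) := by
          ext x
          simp only [mem_insert, mem_erase]
          grind
        exact (ih hbK hj).tail (hset ▸ hmove)
    · have hstep := tokenSlide_of_mem_of_notMem hab ha hbK
      obtain rfl | hbj := eq_or_ne b j
      · exact .single hstep
      have hrest := ih (K := insert b (K.erase a)) (mem_insert_self _ _)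
        (by simp [hbj.symm, hj])
      rw [erase_insert (by simp [hbK])] at hrest
      exact ReflTransGen.head hstep hrest

theorem reflTransGen_tokenSlide_of_card_eq (hr : ∀ a b, ReflTransGen r a b)
    {J J' : Finset α} (hcard : #J = #J') : ReflTransGen (TokenSlide r) J J' := by
  induction hn : #(J \ J') generalizing J with
  | zero =>
    have hsub : J ⊆ J' := sdiff_eq_empty_iff_subset.mp (card_eq_zero.mp hn)
    rw [eq_of_subset_of_card_le hsub hcard.ge]
  | succ n ih =>
    obtain ⟨i, hi⟩ := card_pos.mp (by omega : 0 < #(J \ J'))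
    obtain ⟨j, hj⟩ := card_pos.mp (by rw [card_sdiff_comm hcard.symm]; omega : 0 < #(J' \ J))
    rw [mem_sdiff] at hi hj
    have hK : #(insert j (J.erase i)) = #J' := by
      rw [card_insert_of_notMem (fun h => hj.2 (mem_of_mem_erase h)), card_erase_of_mem hi.1,
        ← hcard, Nat.sub_add_cancel (card_pos.mpr ⟨i, hi.1⟩)]
    have hKn : #(insert j (J.erase i) \ J') = n := by
      rw [insert_sdiff_of_mem _ hj.1, erase_sdiff_comm, card_erase_of_mem (mem_sdiff.mpr hi), hn,
        Nat.add_sub_cancel]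
    exact (reflTransGen_tokenSlide_insert_erase (hr i j) hi.1 hj.2).trans (ih hK hKn)

end TokenSlide

theorem stmt_11_general {I : Type*} [DecidableEq I]
    (G : I → I → Prop)
    (hconn : ∀ i j : I, Relation.ReflTransGen (fun a b => G a b ∨ G b a) i j)
    (J J' : Finset I) (hcard : J.card = J'.card) :
    Relation.ReflTransGen
      (fun K K' : Finset I => ∃ i j : I, (G i j ∨ G j i) ∧ i ∈ K ∧ j ∉ K.erase i ∧
        K' = insert j (K.erase i)) J J' :=
  reflTransGen_tokenSlide_of_card_eq hconn hcard

/-- In a finite weakly connected digraph (no loops), any two vertex subsets of the same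
cardinality are related by finitely many moves along arrows. -/
theorem stmt_11 {I : Type*} [Fintype I] [DecidableEq I]
    (G : I → I → Prop) (hloop : ∀ i, ¬ G i i)
    (hconn : ∀ i j : I, Relation.ReflTransGen (fun a b => G a b ∨ G b a) i j)
    (J J' : Finset I) (hcard : J.card = J'.card) :
    Relation.ReflTransGen
      (fun K K' : Finset I => ∃ i j : I, (G i j ∨ G j i) ∧ i ∈ K ∧ j ∉ K.erase i ∧
        K' = insert j (K.erase i)) J J' :=
  stmt_11_general G hconn J J' hcard
end
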